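/- arXiv:1903.05246 — 5 statements merged into one kernel-verified Lean document; each statement's English description precedes it below -/
import Mathlib

section
/- Let 0 ≤ ℓ < r be real numbers, let F(β) = a + bβ with a ≠ 0 and b ≠ 0, let G : ℝ → ℝ be concave on [ℓ, r] and piecewise linear on [ℓ, r] (there exist finitely many points ℓ = t₀ < t₁ < ⋯ < t_k = r such that G is affine on each [t_i, t_{i+1}]), and suppose F(β) ≥ G(β) > 0 for all β ∈ [ℓ, r]. Define P(β) = F(β)/G(β). If ℓ ≤ β⁻ < β⁺ ≤ r and P(β⁻) = P(β⁺), then P achieves its minimum over [ℓ, r] inside [β⁻, β⁺]: there exists β* ∈ [β⁻, β⁺] such that P(β*) ≤ P(β) for all β ∈ [ℓ, r]. -/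
/-! With `C` the common value `P β⁻ = P β⁺ ≥ 0`, the function `C • G - F` is concave and vanishes
at `β⁻` and `β⁺`, so it is nonpositive outside `(β⁻, β⁺)`, i.e. `P ≥ C` there. Piecewise linearity
makes `G`, hence `P`, continuous up to the endpoints, so `P` attains its minimum on `[β⁻, β⁺]`;
that minimum is at most `C` and therefore a minimum over all of `[ℓ, r]`. -/

open Set

theorem continuousOn_Icc_of_continuousOn_pieces {α β : Type*} [LinearOrder α] [TopologicalSpace α]
    [OrderClosedTopology α] [TopologicalSpace β] {f : α → β} {k : ℕ} {t : Fin (k + 1) → α}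
    (ht : Monotone t) (hf : ∀ i : Fin k, ContinuousOn f (Icc (t i.castSucc) (t i.succ))) :
    ContinuousOn f (Icc (t 0) (t (Fin.last k))) := by
  suffices ∀ i : Fin (k + 1), ContinuousOn f (Icc (t 0) (t i)) from this (Fin.last k)
  intro i
  induction i using Fin.induction with
  | zero => simp
  | succ j ih =>
    rw [← Icc_union_Icc_eq_Icc (ht (Fin.zero_le _)) (ht (Fin.castSucc_le_succ j))]
    exact ih.union_of_isClosed (hf j) isClosed_Icc isClosed_Icc

theorem continuousOn_Icc_of_piecewise_affine {G : ℝ → ℝ} {k : ℕ} {t : Fin (k + 1) → ℝ}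
    (ht : Monotone t)
    (hG : ∀ i : Fin k, ∃ p q : ℝ, ∀ β ∈ Icc (t i.castSucc) (t i.succ), G β = p + q * β) :
    ContinuousOn G (Icc (t 0) (t (Fin.last k))) := by
  refine continuousOn_Icc_of_continuousOn_pieces ht fun i => ?_
  obtain ⟨p, q, hpq⟩ := hG i
  exact (continuous_const.add (continuous_const.mul continuous_id)).continuousOn.congr hpq

theorem ConcaveOn.affine_div_le_of_notMem_Ioo {s : Set ℝ} {G : ℝ → ℝ} (hG : ConcaveOn ℝ s G)
    (hGpos : ∀ z ∈ s, 0 < G z) {a b x y z : ℝ} (hx : x ∈ s) (hy : y ∈ s) (hz : z ∈ s)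
    (hxy : x < y) (hzxy : z ∉ Ioo x y) (hnonneg : 0 ≤ (a + b * x) / G x)
    (heq : (a + b * x) / G x = (a + b * y) / G y) :
    (a + b * x) / G x ≤ (a + b * z) / G z := by
  set C := (a + b * x) / G x
  set H : ℝ → ℝ := fun w => C * G w - (a + b * w)
  have hH : ConcaveOn ℝ s H := by
    have hF : ConvexOn ℝ s fun w => a + b * w :=
      (convexOn_const a hG.1).add ((LinearMap.mulLeft ℝ b).convexOn hG.1)
    exact (hG.smul hnonneg).sub hF
  have hHx : H x = 0 := by simp only [H, C]; field_simp [(hGpos x hx).ne']; ring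
  have hHy : H y = 0 := by simp only [H, heq]; field_simp [(hGpos y hy).ne']; ring
  have hHz : H z ≤ 0 := by
    rcases le_or_gt z x with hzx | hxz
    · exact hHx ▸ hH.left_le_of_le_right'' hz hy hzx hxy (hHx.trans hHy.symm).le
    · have hyz : y ≤ z := not_lt.1 fun hzy => hzxy ⟨hxz, hzy⟩
      exact hHy ▸ hH.right_le_of_le_left'' hx hz hxy hyz (hHy.trans hHx.symm).le
  rw [le_div_iff₀ (hGpos z hz)]
  linarith

theorem fitness_min_between_equal_values_general
    (ℓ r a b : ℝ)
    (G : ℝ → ℝ)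
    (hGconc : ConcaveOn ℝ (Set.Icc ℓ r) G)
    (hGpl : ∃ (k : ℕ) (t : Fin (k + 1) → ℝ), StrictMono t ∧ t 0 = ℓ ∧ t (Fin.last k) = r ∧
        ∀ i : Fin k, ∃ p q : ℝ,
          ∀ β ∈ Set.Icc (t i.castSucc) (t i.succ), G β = p + q * β)
    (hFG : ∀ β ∈ Set.Icc ℓ r, G β ≤ a + b * β)
    (hGpos : ∀ β ∈ Set.Icc ℓ r, 0 < G β)
    (P : ℝ → ℝ) (hP : ∀ β, P β = (a + b * β) / G β)
    (βm βp : ℝ) (h1 : ℓ ≤ βm) (h2 : βm < βp) (h3 : βp ≤ r)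
    (heq : P βm = P βp) :
    ∃ βstar ∈ Set.Icc βm βp, ∀ β ∈ Set.Icc ℓ r, P βstar ≤ P β := by
  obtain ⟨k, t, ht, rfl, rfl, hpl⟩ := hGpl
  have hsub : Icc βm βp ⊆ Icc (t 0) (t (Fin.last k)) := Icc_subset_Icc h1 h3
  have hm := hsub (left_mem_Icc.2 h2.le)
  have hp := hsub (right_mem_Icc.2 h2.le)
  have hPcont : ContinuousOn P (Icc βm βp) := by
    rw [funext hP]
    exact (continuous_const.add (continuous_const.mul continuous_id)).continuousOn.div
      ((continuousOn_Icc_of_piecewise_affine ht.monotone hpl).mono hsub)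
      fun β hβ => (hGpos β (hsub hβ)).ne'
  obtain ⟨βstar, hstar, hmin⟩ :=
    isCompact_Icc.exists_isMinOn (nonempty_Icc.2 h2.le) hPcont
  refine ⟨βstar, hstar, fun β hβ => ?_⟩
  by_cases hin : β ∈ Icc βm βp
  · exact hmin hin
  have hPm_nonneg : 0 ≤ P βm := by
    rw [hP]; exact div_nonneg ((hGpos βm hm).le.trans (hFG βm hm)) (hGpos βm hm).le
  calc P βstar ≤ P βm := hmin (left_mem_Icc.2 h2.le)
    _ ≤ P β := by
      simp only [hP] at heq hPm_nonneg ⊢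
      exact hGconc.affine_div_le_of_notMem_Ioo hGpos hm hp hβ h2
        (fun h => hin (Ioo_subset_Icc_self h)) hPm_nonneg heq

/-- **Property (b) of the parameter fitness function.**
With `F β = a + b β` (`a, b ≠ 0`), `G` concave and piecewise linear on `[ℓ, r]`,
and `F β ≥ G β > 0` on `[ℓ, r]`, if `P = F / G` takes equal values at two points
`ℓ ≤ β⁻ < β⁺ ≤ r`, then `P` achieves its minimum over `[ℓ, r]` inside `[β⁻, β⁺]`. -/
theorem fitness_min_between_equal_values
    (ℓ r a b : ℝ) (hℓ : 0 ≤ ℓ) (hlr : ℓ < r) (ha : a ≠ 0) (hb : b ≠ 0)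
    (G : ℝ → ℝ)
    (hGconc : ConcaveOn ℝ (Set.Icc ℓ r) G)
    (hGpl : ∃ (k : ℕ) (t : Fin (k + 1) → ℝ), StrictMono t ∧ t 0 = ℓ ∧ t (Fin.last k) = r ∧
        ∀ i : Fin k, ∃ p q : ℝ,
          ∀ β ∈ Set.Icc (t i.castSucc) (t i.succ), G β = p + q * β)
    (hFG : ∀ β ∈ Set.Icc ℓ r, G β ≤ a + b * β)
    (hGpos : ∀ β ∈ Set.Icc ℓ r, 0 < G β)
    (P : ℝ → ℝ) (hP : ∀ β, P β = (a + b * β) / G β)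
    (βm βp : ℝ) (h1 : ℓ ≤ βm) (h2 : βm < βp) (h3 : βp ≤ r)
    (heq : P βm = P βp) :
    ∃ βstar ∈ Set.Icc βm βp, ∀ β ∈ Set.Icc ℓ r, P βstar ≤ P β :=
  fitness_min_between_equal_values_general ℓ r a b G hGconc hGpl hFG hGpos P hP βm βp h1 h2 h3 heq
end

section
/- Let ℓ < m < r be real numbers and let P : ℝ → ℝ satisfy the property that for all β⁻, β, β⁺ with ℓ ≤ β⁻ < β < β⁺ ≤ r, P(β) ≤ max(P(β⁻), P(β⁺)). If P(ℓ) < P(m) < P(r), then P(β) ≥ P(m) for every β ∈ [m, r]; consequently every value of P on [ℓ, r] is at least as large as some value of P on [ℓ, m], so any minimizer of P over [ℓ, r] may be sought in [ℓ, m]. -/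
/-- **One-branch bisection step (left branch).** If `P` satisfies property (a) on
`[ℓ, r]` and `P ℓ < P m < P r` for `ℓ < m < r`, then `P β ≥ P m` for all `β ∈ [m, r]`;
consequently every value of `P` on `[ℓ, r]` is at least some value of `P` on `[ℓ, m]`,
so a minimizer may be sought in `[ℓ, m]`. -/
theorem one_branch_left
    (ℓ m r : ℝ) (hlm : ℓ < m) (hmr : m < r) (P : ℝ → ℝ)
    (hprop : ∀ βm β βp : ℝ, ℓ ≤ βm → βm < β → β < βp → βp ≤ r →
      P β ≤ max (P βm) (P βp))
    (h1 : P ℓ < P m) (h2 : P m < P r) :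
    (∀ β ∈ Set.Icc m r, P m ≤ P β) ∧
      ∀ β ∈ Set.Icc ℓ r, ∃ β' ∈ Set.Icc ℓ m, P β' ≤ P β := by
  have key : ∀ β ∈ Set.Icc m r, P m ≤ P β := by
    intro β ⟨hmβ, hβr⟩
    rcases eq_or_lt_of_le hmβ with h | h
    · exact le_of_eq (congrArg P h)
    · have := hprop ℓ m β le_rfl hlm h hβr
      rcases max_cases (P ℓ) (P β) with ⟨he, _⟩ | ⟨he, _⟩
      · linarith [he ▸ this]
      · linarith [he ▸ this]
  refine ⟨key, fun β ⟨hℓβ, hβr⟩ => ?_⟩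
  rcases le_or_gt β m with h | h
  · exact ⟨β, ⟨hℓβ, h⟩, le_rfl⟩
  · exact ⟨m, ⟨hlm.le, le_rfl⟩, key β ⟨h.le, hβr⟩⟩
end

section
/- Let ℓ < m < r be real numbers and let P : ℝ → ℝ satisfy: (a) for all β⁻, β, β⁺ with ℓ ≤ β⁻ < β < β⁺ ≤ r, P(β) ≤ max(P(β⁻), P(β⁺)); and (b) whenever ℓ ≤ x < y ≤ r and P(x) = P(y), there exists β* ∈ [x, y] with P(β*) ≤ P(β) for all β ∈ [ℓ, r]. If P(ℓ) = P(m) = P(r), then m itself is a minimizer of P over [ℓ, r]: P(m) ≤ P(β) for all β ∈ [ℓ, r]. -/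
/-- **Two-branch base case.** If `P` satisfies properties (a) and (b) on `[ℓ, r]`
and `P ℓ = P m = P r` for `ℓ < m < r`, then `m` is a minimizer of `P` over `[ℓ, r]`. -/
theorem three_equal_values_middle_is_min
    (ℓ m r : ℝ) (hlm : ℓ < m) (hmr : m < r) (P : ℝ → ℝ)
    (hpropA : ∀ βm β βp : ℝ, ℓ ≤ βm → βm < β → β < βp → βp ≤ r →
      P β ≤ max (P βm) (P βp))
    (hpropB : ∀ x y : ℝ, ℓ ≤ x → x < y → y ≤ r → P x = P y →
      ∃ βstar ∈ Set.Icc x y, ∀ β ∈ Set.Icc ℓ r, P βstar ≤ P β)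
    (heq1 : P ℓ = P m) (heq2 : P m = P r) :
    ∀ β ∈ Set.Icc ℓ r, P m ≤ P β := by
  obtain ⟨b1, ⟨hb1l, hb1m⟩, hmin1⟩ := hpropB ℓ m le_rfl hlm (le_of_lt hmr) heq1
  obtain ⟨b2, ⟨hb2m, hb2r⟩, hmin2⟩ := hpropB m r (le_of_lt hlm) hmr le_rfl heq2
  intro β hβ
  rcases eq_or_lt_of_le hb1m with h1 | h1
  · exact h1 ▸ hmin1 β hβ
  rcases eq_or_lt_of_le hb2m with h2 | h2
  · exact h2 ▸ hmin2 β hβ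
  have hA := hpropA b1 m b2 hb1l h1 h2 hb2r
  have := hmin1 β hβ
  have := hmin2 β hβ
  rcases max_cases (P b1) (P b2) with ⟨he, _⟩ | ⟨he, _⟩ <;> rw [he] at hA <;> linarith
end

section
/- Let G = (V, E) be a finite simple graph with m = |E| > 0 edges, adjacency indicator A(u,v) ∈ {0,1}, and degrees d_u. Set λ = 1/(2m) and define the degree-weighted LambdaCC objective of a partition C of V (with δ(u,v) = 1 if u and v lie in the same cluster of C and δ(u,v) = 0 otherwise) as Obj(C) = Σ over unordered pairs {u,v} with {u,v} ∈ E and 1 − λ d_u d_v ≥ 0 of (1 − λ d_u d_v)(1 − δ(u,v)), plus Σ over unordered pairs {u,v} with {u,v} ∈ E and 1 − λ d_u d_v < 0 of (λ d_u d_v − 1)·δ(u,v), plus Σ over unordered pairs {u,v} ∉ E with u ≠ v of λ d_u d_v · δ(u,v). Then a partition C minimizes Obj if and only if C maximizes M(C) = Σ over unordered pairs {u,v} with u ≠ v of (A(u,v) − d_u d_v/(2m))·δ(u,v); that is, degree-weighted LambdaCC with λ = 1/(2m) is equivalent to modularity maximization. -/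
/-!
Pair by pair, the LambdaCC cost plus the modularity contribution does not depend on whether the
pair is co-clustered: with `w = λ d_u d_v` (which is `d_u d_v / (2m)` for `λ = 1/(2m)`) it equals
`1 - w` on edges with `w ≤ 1` and `0` otherwise. Hence `Obj + M` is the same for every
clustering, and minimizing `Obj` is maximizing `M`.
-/

theorem forall_le_iff_forall_ge_of_add_const {α : Type*} {F G : α → ℝ}
    (h : ∀ x y, F x + G x = F y + G y) (x : α) :
    (∀ y, F x ≤ F y) ↔ (∀ y, G y ≤ G x) :=
  forall_congr' fun y => by constructor <;> intro <;> linarith [h x y]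

theorem lambdaCC_cost_add_modularity_term (adj same : Prop) [Decidable adj] [Decidable same]
    (w : ℝ) :
    (if adj then
        (if 0 ≤ 1 - w then (1 - w) * (if same then 0 else 1)
        else (w - 1) * (if same then 1 else 0))
      else w * (if same then 1 else 0)) +
      ((if adj then 1 else 0) - w) * (if same then 1 else 0) =
    if adj ∧ 0 ≤ 1 - w then 1 - w else 0 := by
  by_cases adj <;> by_cases 0 ≤ 1 - w <;> by_cases same <;> simp [*]

theorem lambdaCC_modularity_equivalence_general
    {V : Type*} [Fintype V] [DecidableEq V] (G : SimpleGraph V) [DecidableRel G.Adj]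
    (m : ℕ)
    (lam : ℝ) (hlam : lam = 1 / (2 * (m : ℝ)))
    (Obj M : (V → ℕ) → ℝ)
    (hObj : ∀ f : V → ℕ, Obj f = (∑ p ∈ Finset.univ.offDiag (α := V),
        (if G.Adj p.1 p.2 then
          (if 0 ≤ 1 - lam * (G.degree p.1 : ℝ) * (G.degree p.2 : ℝ) then
            (1 - lam * (G.degree p.1 : ℝ) * (G.degree p.2 : ℝ)) *
              (if f p.1 = f p.2 then 0 else 1)
          else
            (lam * (G.degree p.1 : ℝ) * (G.degree p.2 : ℝ) - 1) *
              (if f p.1 = f p.2 then 1 else 0))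
        else
          lam * (G.degree p.1 : ℝ) * (G.degree p.2 : ℝ) *
            (if f p.1 = f p.2 then 1 else 0))) / 2)
    (hM : ∀ f : V → ℕ, M f = (∑ p ∈ Finset.univ.offDiag (α := V),
        ((if G.Adj p.1 p.2 then (1 : ℝ) else 0)
            - (G.degree p.1 : ℝ) * (G.degree p.2 : ℝ) / (2 * (m : ℝ))) *
          (if f p.1 = f p.2 then 1 else 0)) / 2)
    (f : V → ℕ) :
    (∀ g : V → ℕ, Obj f ≤ Obj g) ↔ (∀ g : V → ℕ, M g ≤ M f) := by
  have hw : ∀ p : V × V, (G.degree p.1 : ℝ) * G.degree p.2 / (2 * m) =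
      lam * G.degree p.1 * G.degree p.2 := fun p => by rw [hlam]; ring
  refine forall_le_iff_forall_ge_of_add_const (fun g g' => ?_) f
  rw [hObj, hM, hObj, hM, ← add_div, ← add_div, ← Finset.sum_add_distrib,
    ← Finset.sum_add_distrib]
  simp only [hw, lambdaCC_cost_add_modularity_term]

/-- **Degree-weighted LambdaCC with `λ = 1/(2m)` is equivalent to modularity.**
Clusterings are represented by label functions `f : V → ℕ` (two vertices are
co-clustered iff they receive the same label); `δ(u,v) = 1` iff `f u = f v`.
Sums over unordered pairs are realized as half the sum over ordered pairs of
distinct vertices.  A clustering minimizes the degree-weighted LambdaCC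
objective `Obj` iff it maximizes the modularity-type quantity
`M(C) = Σ_{u<v} (A(u,v) − d_u d_v/(2m)) δ(u,v)`. -/
theorem lambdaCC_modularity_equivalence
    {V : Type*} [Fintype V] [DecidableEq V] (G : SimpleGraph V) [DecidableRel G.Adj]
    (m : ℕ) (hm : m = G.edgeFinset.card) (hm0 : 0 < m)
    (lam : ℝ) (hlam : lam = 1 / (2 * (m : ℝ)))
    (Obj M : (V → ℕ) → ℝ)
    (hObj : ∀ f : V → ℕ, Obj f = (∑ p ∈ Finset.univ.offDiag (α := V),
        (if G.Adj p.1 p.2 then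
          (if 0 ≤ 1 - lam * (G.degree p.1 : ℝ) * (G.degree p.2 : ℝ) then
            (1 - lam * (G.degree p.1 : ℝ) * (G.degree p.2 : ℝ)) *
              (if f p.1 = f p.2 then 0 else 1)
          else
            (lam * (G.degree p.1 : ℝ) * (G.degree p.2 : ℝ) - 1) *
              (if f p.1 = f p.2 then 1 else 0))
        else
          lam * (G.degree p.1 : ℝ) * (G.degree p.2 : ℝ) *
            (if f p.1 = f p.2 then 1 else 0))) / 2)
    (hM : ∀ f : V → ℕ, M f = (∑ p ∈ Finset.univ.offDiag (α := V),
        ((if G.Adj p.1 p.2 then (1 : ℝ) else 0)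
            - (G.degree p.1 : ℝ) * (G.degree p.2 : ℝ) / (2 * (m : ℝ))) *
          (if f p.1 = f p.2 then 1 else 0)) / 2)
    (f : V → ℕ) :
    (∀ g : V → ℕ, Obj f ≤ Obj g) ↔ (∀ g : V → ℕ, M g ≤ M f) :=
  lambdaCC_modularity_equivalence_general G m lam hlam Obj M hObj hM f
end

section
/- Let G = (V, E) be a finite simple graph with m = |E| edges and let λ be a real number with m/(m+1) < λ < 1. For a partition C of V, let P(C) be the number of edges of G whose endpoints lie in different clusters of C, and let N(C) be the number of unordered non-adjacent pairs {u,v} (u ≠ v, {u,v} ∉ E) whose endpoints lie in the same cluster of C; the standard LambdaCC objective is Obj_λ(C) = (1−λ)·P(C) + λ·N(C). Then a partition C minimizes Obj_λ if and only if N(C) = 0 (every cluster of C induces a clique in G) and P(C) is minimal among all partitions of V into cliques; that is, standard LambdaCC with λ > m/(m+1) is equivalent to the cluster deletion problem. -/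
open Finset

/-- **Standard LambdaCC with `λ > m/(m+1)` is equivalent to cluster deletion.**
Clusterings are represented by label functions `f : V → ℕ` (two vertices are
co-clustered iff they receive the same label).  `P f` counts the edges whose
endpoints lie in different clusters, and `N f` counts the unordered non-adjacent
pairs of distinct vertices lying in the same cluster (each realized as half the
corresponding ordered-pair count).  With `Obj_λ(C) = (1−λ)·P(C) + λ·N(C)` and
`m/(m+1) < λ < 1`, a clustering minimizes `Obj_λ` iff `N(C) = 0` (every cluster
induces a clique) and `P(C)` is minimal among all clusterings into cliques. -/
theorem lambdaCC_cluster_deletion_equivalence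
    {V : Type*} [Fintype V] [DecidableEq V] (G : SimpleGraph V) [DecidableRel G.Adj]
    (m : ℕ) (hm : m = G.edgeFinset.card)
    (lam : ℝ) (hlam1 : (m : ℝ) / ((m : ℝ) + 1) < lam) (hlam2 : lam < 1)
    (P N : (V → ℕ) → ℝ)
    (hP : ∀ f : V → ℕ, P f = ((Finset.univ.offDiag (α := V)).filter
        (fun p : V × V => G.Adj p.1 p.2 ∧ f p.1 ≠ f p.2)).card / 2)
    (hN : ∀ f : V → ℕ, N f = ((Finset.univ.offDiag (α := V)).filter
        (fun p : V × V => ¬ G.Adj p.1 p.2 ∧ f p.1 = f p.2)).card / 2)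
    (Obj : (V → ℕ) → ℝ) (hObj : ∀ f : V → ℕ, Obj f = (1 - lam) * P f + lam * N f)
    (f : V → ℕ) :
    (∀ g : V → ℕ, Obj f ≤ Obj g) ↔
      (N f = 0 ∧ ∀ g : V → ℕ, N g = 0 → P f ≤ P g) := by

  have h1lam : (0:ℝ) < 1 - lam := by linarith
  -- basic: λ > m(1-λ)
  have hlampos : (0:ℝ) < lam := lt_of_le_of_lt (by positivity) hlam1
  have hkey : (1 - lam) * (m : ℝ) < lam := by
    have hm1 : (0:ℝ) < (m : ℝ) + 1 := by positivity
    rw [div_lt_iff₀ hm1] at hlam1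
    nlinarith
  -- P g ≤ m for all g
  have hPle : ∀ g : V → ℕ, P g ≤ (m : ℝ) := by
    intro g
    rw [hP]
    have hsub : ((Finset.univ.offDiag (α := V)).filter
        (fun p : V × V => G.Adj p.1 p.2 ∧ g p.1 ≠ g p.2)) ⊆
        (Finset.univ.filter fun (x : V × V) => G.Adj x.1 x.2) := by
      intro p hp
      simp only [Finset.mem_filter, Finset.mem_offDiag] at hp ⊢
      exact ⟨Finset.mem_univ _, hp.2.1⟩
    have hc : ((Finset.univ.offDiag (α := V)).filter
        (fun p : V × V => G.Adj p.1 p.2 ∧ g p.1 ≠ g p.2)).card ≤ 2 * m := by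
      calc _ ≤ (Finset.univ.filter fun (x : V × V) => G.Adj x.1 x.2).card :=
              Finset.card_le_card hsub
        _ = 2 * m := by
              rw [hm, ← SimpleGraph.two_mul_card_edgeFinset]
    have : (((Finset.univ.offDiag (α := V)).filter
        (fun p : V × V => G.Adj p.1 p.2 ∧ g p.1 ≠ g p.2)).card : ℝ) ≤ 2 * m := by
      exact_mod_cast hc
    linarith
  -- P, N nonneg
  have hPnn : ∀ g : V → ℕ, 0 ≤ P g := by intro g; rw [hP]; positivity
  have hNnn : ∀ g : V → ℕ, 0 ≤ N g := by intro g; rw [hN]; positivity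
  -- N g ≠ 0 → 1 ≤ N g
  have hNge : ∀ g : V → ℕ, N g ≠ 0 → 1 ≤ N g := by
    intro g hg
    set s := ((Finset.univ.offDiag (α := V)).filter
        (fun p : V × V => ¬ G.Adj p.1 p.2 ∧ g p.1 = g p.2)) with hs
    have hcard : s.Nonempty := by
      rw [Finset.nonempty_iff_ne_empty]
      intro h
      rw [hN, ← hs, h] at hg
      simp at hg
    obtain ⟨a, ha⟩ := hcard
    have ha' : (a.2, a.1) ∈ s := by
      simp only [hs, Finset.mem_filter, Finset.mem_offDiag] at ha ⊢
      exact ⟨⟨Finset.mem_univ _, Finset.mem_univ _, fun h => ha.1.2.2 h.symm⟩,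
        fun h => ha.2.1 h.symm, ha.2.2.symm⟩
    have hne : a ≠ (a.2, a.1) := by
      intro h
      have := ha
      simp only [hs, Finset.mem_filter, Finset.mem_offDiag] at this
      exact this.1.2.2 (congrArg Prod.fst h)
    have h2 : 2 ≤ s.card := Finset.one_lt_card.mpr ⟨a, ha, (a.2, a.1), ha', hne⟩
    have : (2 : ℝ) ≤ (s.card : ℝ) := by exact_mod_cast h2
    rw [hN, ← hs]
    linarith
  -- injective labeling has N = 0
  obtain ⟨g₀, hg₀N⟩ : ∃ g₀ : V → ℕ, N g₀ = 0 := by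
    refine ⟨fun v => (Fintype.equivFin V v : ℕ), ?_⟩
    rw [hN]
    have : ((Finset.univ.offDiag (α := V)).filter
        (fun p : V × V => ¬ G.Adj p.1 p.2 ∧
          ((Fintype.equivFin V p.1 : ℕ) = (Fintype.equivFin V p.2 : ℕ)))) = ∅ := by
      rw [Finset.filter_eq_empty_iff]
      intro p hp h
      rw [Finset.mem_offDiag] at hp
      exact hp.2.2 ((Fintype.equivFin V).injective (Fin.val_injective h.2))
    rw [this]
    simp
  constructor
  · intro hmin
    have hNf : N f = 0 := by
      by_contra hne
      have h1 : Obj f ≤ Obj g₀ := hmin g₀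
      rw [hObj, hObj, hg₀N] at h1
      have h2 : (1 - lam) * P g₀ ≤ (1 - lam) * m :=
        mul_le_mul_of_nonneg_left (hPle g₀) (le_of_lt h1lam)
      have h3 : lam * 1 ≤ lam * N f :=
        mul_le_mul_of_nonneg_left (hNge f hne) (by linarith)
      have h4 : 0 ≤ (1 - lam) * P f := mul_nonneg (le_of_lt h1lam) (hPnn f)
      nlinarith
    refine ⟨hNf, fun g hg => ?_⟩
    have := hmin g
    rw [hObj, hObj, hNf, hg] at this
    have := le_of_mul_le_mul_left (by linarith : (1 - lam) * P f ≤ (1 - lam) * P g) h1lam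
    exact this
  · rintro ⟨hNf, hPf⟩ g
    rw [hObj, hObj, hNf]
    by_cases hg : N g = 0
    · rw [hg]
      have := hPf g hg
      nlinarith
    · have h1 : (1 - lam) * P f ≤ (1 - lam) * (m : ℝ) :=
        mul_le_mul_of_nonneg_left (hPle f) (le_of_lt h1lam)
      have h2 : lam * 1 ≤ lam * N g :=
        mul_le_mul_of_nonneg_left (hNge g hg) (le_of_lt hlampos)
      have h4 : 0 ≤ (1 - lam) * P g := mul_nonneg (le_of_lt h1lam) (hPnn g)
      linarith
end
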